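/- arXiv:2504.19751 — 2 statements merged into one kernel-verified Lean document; each statement's English description precedes it below -/
import Mathlib

section
/- For every graph G, tree-tw(G) + 1 ≤ tree-α(G) · tree-χ(G), where tree-tw(G) is the minimum over tree-decompositions of G of the maximum treewidth of a subgraph induced by a bag. -/
open SimpleGraph

structure TreeDecomp {V : Type} (G : SimpleGraph V) where
  ι : Type
  tree : SimpleGraph ι
  isTree : tree.IsTree
  bag : ι → Finset V
  covers_edge : ∀ ⦃u v : V⦄, G.Adj u v → ∃ t, u ∈ bag t ∧ v ∈ bag t
  support_connected : ∀ v : V, (tree.induce {t | v ∈ bag t}).Connected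

noncomputable def indepNum {V : Type} (G : SimpleGraph V) (s : Set V) : ℕ :=
  sSup {n | ∃ t : Finset V, ↑t ⊆ s ∧ (↑t : Set V).Pairwise (fun a b => ¬ G.Adj a b) ∧ t.card = n}

noncomputable def alpha {V : Type} (G : SimpleGraph V) : ℕ := indepNum G Set.univ

noncomputable def chiNat {V : Type} (G : SimpleGraph V) : ℕ := G.chromaticNumber.toNat

noncomputable def tw {V : Type} (G : SimpleGraph V) : ℕ :=
  sInf {w | ∃ D : TreeDecomp G, ∀ t, (D.bag t).card ≤ w + 1}

noncomputable def treeAlpha {V : Type} (G : SimpleGraph V) : ℕ :=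
  sInf {k | ∃ D : TreeDecomp G, ∀ t, indepNum G ↑(D.bag t) ≤ k}

noncomputable def treeChi {V : Type} (G : SimpleGraph V) : ℕ :=
  sInf {k | ∃ D : TreeDecomp G, ∀ t, chiNat (G.induce ↑(D.bag t)) ≤ k}

noncomputable def treeTw {V : Type} (G : SimpleGraph V) : ℕ :=
  sInf {k | ∃ D : TreeDecomp G, ∀ t, tw (G.induce ↑(D.bag t)) ≤ k}

noncomputable def omegaNum {V : Type} (G : SimpleGraph V) : ℕ :=
  sSup {n | ∃ t : Finset V, G.IsClique ↑t ∧ t.card = n}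

def completion {V : Type} (H : SimpleGraph V) :
    SimpleGraph (V ⊕ {p : Sym2 V // ¬ p.IsDiag ∧ p ∉ H.edgeSet}) :=
  SimpleGraph.fromRel (fun x y =>
    match x, y with
    | .inl u, .inl v => H.Adj u v
    | .inl u, .inr p => u ∈ p.1
    | _, _ => False)

/-! Take tree-decompositions `Da`, `Dc` of `G` attaining `treeAlpha G = a` and `treeChi G = c`.
Restricting `Da` to the subgraph induced by a bag `B` of `Dc` gives a tree-decomposition of `G[B]`
whose bags are the sets `B' ∩ B` for bags `B'` of `Da`. Splitting `B' ∩ B` into the colour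
classes of an optimal colouring, each of which is independent, gives
`|B' ∩ B| ≤ α(B' ∩ B) · χ(B' ∩ B) ≤ a · c`. So `tw G[B] + 1 ≤ a · c` for every bag `B` of `Dc`;
the product `a · c` is positive since a vertex lies in a bag of each decomposition. -/

open Finset

section IndepChi

variable {V : Type} (G : SimpleGraph V)

lemma card_le_indepNum {B t : Finset V} (htB : t ⊆ B) (ht : G.IsIndepSet ↑t) :
    #t ≤ indepNum G ↑B :=
  le_csSup ⟨#B, by rintro n ⟨u, hu, -, rfl⟩; exact card_le_card (coe_subset.mp hu)⟩
    ⟨t, coe_subset.mpr htB, ht, rfl⟩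

lemma indepNum_mono {A B : Finset V} (hAB : A ⊆ B) : indepNum G ↑A ≤ indepNum G ↑B :=
  csSup_le ⟨0, ∅, by simp, by simp, rfl⟩ fun _ ⟨t, htA, ht, hn⟩ =>
    hn ▸ card_le_indepNum G ((coe_subset.mp htA).trans hAB) ht

lemma card_le_indepNum_of_isIndepSet_induce {B : Finset V} {S : Finset (↑B : Set V)}
    (hS : (G.induce ↑B).IsIndepSet ↑S) : #S ≤ indepNum G ↑B := by
  rw [← card_map (Function.Embedding.subtype _)]
  refine card_le_indepNum G (fun x hx => ?_) ?_
  · obtain ⟨y, -, rfl⟩ := mem_map.mp hx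
    exact y.2
  · rw [IsIndepSet, coe_map, (Function.Embedding.subtype _).injective.injOn.pairwise_image]
    exact hS

lemma chiNat_le_of_colorable {W : Type} {H : SimpleGraph W} {n : ℕ} (h : H.Colorable n) :
    chiNat H ≤ n :=
  ENat.toNat_le_of_le_natCast h.chromaticNumber_le

lemma chiNat_induce_mono {A B : Finset V} (hAB : A ⊆ B) :
    chiNat (G.induce ↑A) ≤ chiNat (G.induce ↑B) :=
  chiNat_le_of_colorable <| (G.induce (↑B : Set V)).colorable_chromaticNumber_of_fintype.of_hom
    (G.induceHomOfLE (coe_subset.mpr hAB)).toHom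

lemma card_le_indepNum_mul_chiNat (B : Finset V) :
    #B ≤ indepNum G ↑B * chiNat (G.induce ↑B) := by
  classical
  obtain ⟨C⟩ := (G.induce (↑B : Set V)).colorable_chromaticNumber_of_fintype
  calc #B = #(univ : Finset (↑B : Set V)) := by simp
    _ ≤ indepNum G ↑B * #(univ : Finset (Fin (chiNat (G.induce ↑B)))) :=
      card_le_mul_card_image_of_maps_to (f := C) (fun _ _ => mem_univ _) _ fun i _ =>
        card_le_indepNum_of_isIndepSet_induce G <| by
          simpa [Coloring.colorClass] using C.isIndepSet_colorClass i
    _ = indepNum G ↑B * chiNat (G.induce ↑B) := by simp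

end IndepChi

namespace TreeDecomp

variable {V : Type} {G : SimpleGraph V}

def single [Fintype V] (G : SimpleGraph V) : TreeDecomp G where
  ι := Unit
  tree := ⊥
  isTree := .of_subsingleton
  bag _ := univ
  covers_edge _ _ _ := ⟨(), mem_univ _, mem_univ _⟩
  support_connected v := by
    have : Nonempty {t : Unit | v ∈ (univ : Finset V)} := ⟨⟨(), mem_univ v⟩⟩
    exact .of_subsingleton

def induce (D : TreeDecomp G) (s : Set V) [DecidablePred (· ∈ s)] : TreeDecomp (G.induce s) where
  ι := D.ι
  tree := D.tree
  isTree := D.isTree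
  bag t := (D.bag t).subtype (· ∈ s)
  covers_edge _ _ huv :=
    let ⟨t, hu, hv⟩ := D.covers_edge huv
    ⟨t, mem_subtype.mpr hu, mem_subtype.mpr hv⟩
  support_connected v := by
    have h : {t | v ∈ (D.bag t).subtype (· ∈ s)} = {t | ↑v ∈ D.bag t} :=
      Set.ext fun _ => mem_subtype
    exact h ▸ D.support_connected v

lemma exists_mem_bag (D : TreeDecomp G) (v : V) : ∃ t, v ∈ D.bag t :=
  let ⟨t, ht⟩ := (D.support_connected v).nonempty
  ⟨t, ht⟩

end TreeDecomp

lemma exists_treeDecomp_forall_le_sInf {V : Type} [Fintype V] (G : SimpleGraph V)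
    (f : Finset V → ℕ) :
    ∃ D : TreeDecomp G, ∀ t, f (D.bag t) ≤ sInf {k | ∃ D : TreeDecomp G, ∀ t, f (D.bag t) ≤ k} :=
  Nat.sInf_mem (s := {k | ∃ D : TreeDecomp G, ∀ t, f (D.bag t) ≤ k})
    ⟨f univ, TreeDecomp.single G, fun _ => le_rfl⟩

lemma tw_induce_le {V : Type} [DecidableEq V] {G : SimpleGraph V} (D : TreeDecomp G)
    (B : Finset V) {w : ℕ} (h : ∀ s, #(D.bag s ∩ B) ≤ w + 1) : tw (G.induce ↑B) ≤ w := by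
  refine Nat.sInf_le ⟨D.induce ↑B, fun s => ?_⟩
  simpa only [TreeDecomp.induce, card_subtype, filter_mem_eq_inter, mem_coe] using h s

lemma card_bag_inter_le_mul {V : Type} [DecidableEq V] {G : SimpleGraph V} {Da Dc : TreeDecomp G}
    {a c : ℕ} (ha : ∀ s, indepNum G ↑(Da.bag s) ≤ a)
    (hc : ∀ t, chiNat (G.induce ↑(Dc.bag t)) ≤ c) (s : Da.ι) (t : Dc.ι) :
    #(Da.bag s ∩ Dc.bag t) ≤ a * c :=
  (card_le_indepNum_mul_chiNat G _).trans <| Nat.mul_le_mul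
    ((indepNum_mono G inter_subset_left).trans (ha s))
    ((chiNat_induce_mono G inter_subset_right).trans (hc t))

theorem stmt4 {V : Type} [Fintype V] [Nonempty V] (G : SimpleGraph V) :
    treeTw G + 1 ≤ treeAlpha G * treeChi G := by
  classical
  obtain ⟨Da, hDa⟩ := exists_treeDecomp_forall_le_sInf G fun B => indepNum G ↑B
  obtain ⟨Dc, hDc⟩ := exists_treeDecomp_forall_le_sInf G fun B => chiNat (G.induce ↑B)
  have hbound : ∀ s t, #(Da.bag s ∩ Dc.bag t) ≤ treeAlpha G * treeChi G :=
    card_bag_inter_le_mul hDa hDc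
  obtain ⟨v⟩ := ‹Nonempty V›
  obtain ⟨s, hs⟩ := Da.exists_mem_bag v
  obtain ⟨t, ht⟩ := Dc.exists_mem_bag v
  have hpos : 0 < treeAlpha G * treeChi G :=
    (card_pos.mpr ⟨v, mem_inter.mpr ⟨hs, ht⟩⟩).trans_le (hbound s t)
  have htw : treeTw G ≤ treeAlpha G * treeChi G - 1 :=
    Nat.sInf_le ⟨Dc, fun t => tw_induce_le Da _ fun s => by have := hbound s t; omega⟩
  omega
end

section
/- If H is a graph with |V(H)| ≥ 3, then tree-α(C(H)) ≤ α(H), where C(H) is the 1-completion of H. -/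
open SimpleGraph

/-!
Take the star tree decomposition of `C(H)`: the centre bag is `V(H)`, and each non-edge `p = uv`
of `H` gets a leaf bag `{p, u, v}`, i.e. the closed neighbourhood of the subdivision vertex `p`.
An independent set in the centre bag is an independent set of `H`. An independent set in a leaf
bag either contains `p`, and then is `{p}` since `p` is adjacent to the rest of its bag, or lies
inside `V(H)`. Either way it has at most `α(H)` vertices.
-/

section StarDecomposition

variable {ι W β : Type}

lemma connected_induce_starGraph_of_center_mem {r : ι} {S : Set ι} (hr : r ∈ S) :
    ((starGraph r).induce S).Connected :=
  Connected.of_isUniversal (v := ⟨r, hr⟩) fun _ hw =>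
    starGraph_center_adj fun h => hw (Subtype.ext h)

lemma connected_induce_singleton (G : SimpleGraph ι) (x : ι) : (G.induce {x}).Connected := by
  rw [induce_singleton_eq_top]
  exact connected_top

def TreeDecomp.ofStar {G : SimpleGraph W} (bag : Option β → Finset W)
    (covers_edge : ∀ ⦃u v : W⦄, G.Adj u v → ∃ t, u ∈ bag t ∧ v ∈ bag t)
    (mem_bag : ∀ w, w ∈ bag none ∨ ∃ i, ∀ t, w ∈ bag t ↔ t = some i) : TreeDecomp G where
  ι := Option β
  tree := starGraph none
  isTree := isTree_starGraph none
  bag := bag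
  covers_edge := covers_edge
  support_connected w := by
    rcases mem_bag w with h | ⟨i, h⟩
    · exact connected_induce_starGraph_of_center_mem h
    · rw [show {t | w ∈ bag t} = {some i} from Set.ext h]
      exact connected_induce_singleton _ _

end StarDecomposition

section IndependenceNumber

variable {V W : Type} {G : SimpleGraph W}

lemma indepNum_le_of_forall_card_le {s : Set W} {k : ℕ}
    (h : ∀ t : Finset W, ↑t ⊆ s → G.IsIndepSet t → t.card ≤ k) : indepNum G s ≤ k :=
  csSup_le ⟨0, ∅, by simp⟩ (by rintro _ ⟨t, hts, ht, rfl⟩; exact h t hts ht)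

lemma card_le_indepNum_of_subset {s : Set W} (hs : s.Finite) {t : Finset W} (hts : ↑t ⊆ s)
    (ht : G.IsIndepSet t) : t.card ≤ indepNum G s :=
  le_csSup ⟨hs.toFinset.card, by
      rintro _ ⟨u, hus, -, rfl⟩
      exact Finset.card_le_card (by simpa using hus)⟩
    ⟨t, hts, ht, rfl⟩

lemma one_le_alpha [Finite V] [Nonempty V] (H : SimpleGraph V) : 1 ≤ alpha H := by
  inhabit V
  simpa [alpha] using card_le_indepNum_of_subset (G := H) Set.finite_univ (t := {default})
    (Set.subset_univ _) (by simp [IsIndepSet])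

lemma card_le_alpha_of_subset_range [Finite V] {H : SimpleGraph V} (f : H ↪g G)
    {t : Finset W} (ht : G.IsIndepSet t) (htf : ↑t ⊆ Set.range f) : t.card ≤ alpha H := by
  classical
  have hpre : H.IsIndepSet (t.preimage f f.injective.injOn) := fun a ha b hb hab hadj =>
    ht (by simpa using ha) (by simpa using hb) (f.injective.ne hab) (f.map_rel_iff.mpr hadj)
  have hcard : (t.preimage f f.injective.injOn).card = t.card := by
    rw [Finset.card_preimage, Finset.filter_true_of_mem fun x hx => htf hx]
  rw [← hcard]
  exact card_le_indepNum_of_subset Set.finite_univ (Set.subset_univ _) hpre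

end IndependenceNumber

section Completion

variable {V : Type} (H : SimpleGraph V)

abbrev NonEdge : Type := {p : Sym2 V // ¬ p.IsDiag ∧ p ∉ H.edgeSet}

variable {H}

lemma completion_adj_inl_inl {u v : V} :
    (completion H).Adj (.inl u) (.inl v) ↔ H.Adj u v := by
  simp only [completion, fromRel_adj, ne_eq, Sum.inl.injEq]
  exact ⟨fun ⟨_, h⟩ => h.elim id .symm, fun h => ⟨h.ne, .inl h⟩⟩

lemma completion_adj_inl_inr {u : V} {p : NonEdge H} :
    (completion H).Adj (.inl u) (.inr p) ↔ u ∈ p.1 := by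
  simp [completion, fromRel_adj]

lemma completion_not_adj_inr_inr {p q : NonEdge H} : ¬ (completion H).Adj (.inr p) (.inr q) := by
  simp [completion, fromRel_adj]

variable (H)

def completionInl : H ↪g completion H where
  toEmbedding := .inl
  map_rel_iff' := completion_adj_inl_inl

open Classical in
noncomputable def completionBag [Fintype V] : Option (NonEdge H) → Finset (V ⊕ NonEdge H)
  | none => Finset.univ.map .inl
  | some p => insert (.inr p) (p.1.toFinset.map .inl)

variable {H} [Fintype V]

lemma mem_completionBag_none {x : V ⊕ NonEdge H} :
    x ∈ completionBag H none ↔ x ∈ Set.range Sum.inl := by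
  simp [completionBag]

lemma inl_mem_completionBag_some {v : V} {p : NonEdge H} :
    .inl v ∈ completionBag H (some p) ↔ v ∈ p.1 := by
  simp [completionBag]

lemma inr_mem_completionBag_iff {p : NonEdge H} {t : Option (NonEdge H)} :
    .inr p ∈ completionBag H t ↔ t = some p := by
  cases t <;> simp [completionBag, eq_comm]

variable (H) in
noncomputable def completionDecomp : TreeDecomp (completion H) :=
  .ofStar (completionBag H)
    (by
      rintro (u | p) (v | q) h
      · exact ⟨none, mem_completionBag_none.mpr ⟨u, rfl⟩, mem_completionBag_none.mpr ⟨v, rfl⟩⟩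
      · exact ⟨some q, inl_mem_completionBag_some.mpr (completion_adj_inl_inr.mp h),
          inr_mem_completionBag_iff.mpr rfl⟩
      · exact ⟨some p, inr_mem_completionBag_iff.mpr rfl,
          inl_mem_completionBag_some.mpr (completion_adj_inl_inr.mp h.symm)⟩
      · exact (completion_not_adj_inr_inr h).elim)
    (by
      rintro (u | p)
      · exact .inl (mem_completionBag_none.mpr ⟨u, rfl⟩)
      · exact .inr ⟨p, fun t => inr_mem_completionBag_iff⟩)

lemma eq_singleton_of_inr_mem_completionBag {p : NonEdge H} {s : Finset (V ⊕ NonEdge H)}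
    (hs : ↑s ⊆ (completionBag H (some p) : Set (V ⊕ NonEdge H)))
    (hind : (completion H).IsIndepSet s) (hp : .inr p ∈ s) : s = {.inr p} := by
  refine Finset.eq_singleton_iff_unique_mem.mpr ⟨hp, fun x hx => ?_⟩
  by_contra hne
  rcases x with v | q
  · exact hind hx hp hne (completion_adj_inl_inr.mpr (inl_mem_completionBag_some.mp (hs hx)))
  · obtain rfl := Option.some_injective _ (inr_mem_completionBag_iff.mp (hs hx))
    exact hne rfl

lemma indepNum_completionBag_le (t : Option (NonEdge H)) :
    indepNum (completion H) (completionBag H t) ≤ alpha H := by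
  refine indepNum_le_of_forall_card_le fun s hs hind => ?_
  by_cases hp : ∃ p, t = some p ∧ .inr p ∈ s
  · obtain ⟨p, rfl, hp⟩ := hp
    have : Nonempty V := ⟨p.1.out.1⟩
    rw [eq_singleton_of_inr_mem_completionBag hs hind hp, Finset.card_singleton]
    exact one_le_alpha H
  · refine card_le_alpha_of_subset_range (completionInl H) hind fun x hx => ?_
    rcases x with v | q
    · exact ⟨v, rfl⟩
    · exact (hp ⟨q, inr_mem_completionBag_iff.mp (hs hx), hx⟩).elim

end Completion

theorem stmt7_general {V : Type} [Fintype V] (H : SimpleGraph V) :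
    treeAlpha (completion H) ≤ alpha H :=
  Nat.sInf_le ⟨completionDecomp H, indepNum_completionBag_le⟩

theorem stmt7 {V : Type} [Fintype V] (H : SimpleGraph V) (hV : 3 ≤ Fintype.card V) :
    treeAlpha (completion H) ≤ alpha H :=
  stmt7_general H
end
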